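/- Let n ≥ 2, α ∈ [0, 1/2], τ ∈ (0,1), X a measurable space, and D a probability measure on X × [n]. Then for every measurable g : X → R^n, er^{ℓ^α}_D[pred^CS_τ ∘ g] − er^{ℓ^α,*}_D ≤ ( er^{ψ^{CS,α}}_D[g] − er^{ψ^{CS,α},*}_D ) / ( 2 min(τ, 1−τ) ). -/

import Mathlib

open scoped BigOperators
open MeasureTheory

/-- The abstain(α) loss: `ℓ^α(y,t) = 0` if `t = y`, `α` if `t = n+1`, and `1` otherwise. -/
noncomputable def abstainLoss (n : ℕ) (α : ℝ) (y : Fin n) (t : Fin (n + 1)) : ℝ :=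
  if t = Fin.last n then α else if (t : ℕ) = (y : ℕ) then 0 else 1

/-- Generalized Crammer–Singer surrogate:
`ψ^{CS,α}(y,u) = 2·max( α·max_{j≠y} γ(u_j − u_y), (1−α)·max_{j≠y} γ(u_j − u_y) ) + 2α`,
where `γ(a) = max(a, −1)`. -/
noncomputable def psiCSa (n : ℕ) (α : ℝ) (y : Fin n) (u : Fin n → ℝ) : ℝ :=
  2 * max (α * ⨆ j : {j : Fin n // j ≠ y}, max (u j.1 - u y) (-1))
      ((1 - α) * ⨆ j : {j : Fin n // j ≠ y}, max (u j.1 - u y) (-1)) + 2 * α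

/-- The largest component of `u`. -/
noncomputable def top1 (n : ℕ) (u : Fin n → ℝ) : ℝ := ⨆ i, u i

/-- The second-largest component of `u` (descending order, with multiplicity). -/
noncomputable def top2 (n : ℕ) (u : Fin n → ℝ) : ℝ :=
  ⨅ i, ⨆ j : {j : Fin n // j ≠ i}, u j.1

/-- `pred^CS_τ`: an index attaining `max_i u_i` if `u_(1) − u_(2) > τ` (the maximizer is
unique in this case), and `n+1` otherwise. -/
noncomputable def predCS (n : ℕ) (τ : ℝ) (u : Fin n → ℝ) : Fin (n + 1) :=
  if h : (τ < top1 n u - top2 n u) ∧ ∃ y : Fin n, ∀ i, u i ≤ u y then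
    Fin.castSucc h.2.choose
  else Fin.last n

/-!
Disintegrating `D` into its marginal on `X` and the conditional class probabilities
`q(x) ∈ stdSimplex ℝ (Fin n)` reduces everything to a pointwise statement about `q`.
If `i` is a top coordinate of `u` and `t = min (u_(1) - u_(2)) 1`, the conditional surrogate risk
`Ψ_q(u) = ∑ q_y ψ(y, u)` is at least `2α + 2t(1 - q_i - α)`, while the conditional abstain risk
of `pred_τ(u)` is `1 - q_i` if the margin exceeds `τ` and `α` otherwise. Comparing the two gives
`2 min(τ, 1 - τ) (L_q(pred_τ u) - L*_q) ≤ Ψ_q(u) - 2 L*_q` with `L*_q` the conditional Bayes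
abstain risk. Since `α ≤ 1/2`, the score putting `1` on the unique class with `q_j > 1 - α`
(or `0` if there is none) attains `Ψ_q = 2 L*_q` and depends measurably on `q`; integrating over
`x` gives the bound.
-/

open Finset ProbabilityTheory
open scoped ENNReal

section Simplex
variable {ι : Type*} [Fintype ι] [DecidableEq ι] {q : ι → ℝ}

lemma sum_mul_ite_eq_of_mem_stdSimplex (hq : q ∈ stdSimplex ℝ ι) (i : ι) (a b : ℝ) :
    ∑ y, q y * (if y = i then a else b) = q i * a + (1 - q i) * b := by
  have hb : ∀ y, (if y = i then a else b) = b + if y = i then a - b else 0 := by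
    intro y; split_ifs <;> ring
  simp only [hb, mul_add, sum_add_distrib, ← sum_mul, hq.2, mul_ite, mul_zero, sum_ite_eq',
    mem_univ, if_true]
  ring

lemma add_le_one_of_mem_stdSimplex (hq : q ∈ stdSimplex ℝ ι) {i j : ι} (hij : i ≠ j) :
    q i + q j ≤ 1 := by
  rw [← sum_pair hij, ← hq.2]
  exact sum_le_univ_sum_of_nonneg hq.1

end Simplex

lemma ENNReal.ofReal_mul_add_le {c a b w d : ℝ} (hc : 0 ≤ c) (ha : 0 ≤ a) (hb : 0 ≤ b)
    (h : c * a + b ≤ w + c * d) :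
    ENNReal.ofReal c * ENNReal.ofReal a + ENNReal.ofReal b ≤
      ENNReal.ofReal w + ENNReal.ofReal c * ENNReal.ofReal d := by
  rw [← ENNReal.ofReal_mul hc, ← ENNReal.ofReal_mul hc,
    ← ENNReal.ofReal_add (mul_nonneg hc ha) hb]
  exact (ENNReal.ofReal_le_ofReal h).trans ENNReal.ofReal_add_le

lemma ENNReal.sub_le_sub_div_of_mul_add_le {a b c e w : ℝ≥0∞} (hc0 : c ≠ 0) (hc : c ≠ ⊤)
    (he : e ≠ ⊤) (h : c * a + e ≤ w + c * b) : a - b ≤ (w - e) / c := by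
  rcases le_total a b with hab | hba
  · rw [tsub_eq_zero_of_le hab]; exact zero_le
  by_cases hb : b = ⊤
  · simp [hb]
  rw [ENNReal.le_div_iff_mul_le (Or.inl hc0) (Or.inl hc)]
  refine ENNReal.le_sub_of_add_le_right he ((ENNReal.add_le_add_iff_right
    (ENNReal.mul_ne_top hb hc)).1 ?_)
  calc (a - b) * c + e + b * c = c * a + e := by
        rw [add_right_comm, ← add_mul, tsub_add_cancel_of_le hba, mul_comm]
    _ ≤ w + c * b := h
    _ = w + b * c := by rw [mul_comm c]

section
variable {n : ℕ} {α τ : ℝ}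

lemma abstainLoss_last (y : Fin n) : abstainLoss n α y (Fin.last n) = α := if_pos rfl

lemma abstainLoss_castSucc (y i : Fin n) :
    abstainLoss n α y i.castSucc = if y = i then 0 else 1 := by
  rw [abstainLoss, if_neg (Fin.castSucc_lt_last i).ne, Fin.val_castSucc]
  simp only [Fin.val_inj, eq_comm]

lemma abstainLoss_nonneg (hα : 0 ≤ α) (y : Fin n) (t : Fin (n + 1)) :
    0 ≤ abstainLoss n α y t := by
  unfold abstainLoss; split_ifs <;> norm_num [hα]

lemma sum_mul_abstainLoss_last {q : Fin n → ℝ} (hq : q ∈ stdSimplex ℝ (Fin n)) :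
    ∑ y, q y * abstainLoss n α y (Fin.last n) = α := by
  simp only [abstainLoss_last, ← sum_mul, hq.2, one_mul]

lemma sum_mul_abstainLoss_castSucc {q : Fin n → ℝ} (hq : q ∈ stdSimplex ℝ (Fin n)) (i : Fin n) :
    ∑ y, q y * abstainLoss n α y i.castSucc = 1 - q i := by
  simp only [abstainLoss_castSucc, sum_mul_ite_eq_of_mem_stdSimplex hq]
  ring

lemma le_psiCSa_of_ne (hα0 : 0 ≤ α) {y j : Fin n} (hj : j ≠ y) (u : Fin n → ℝ) :
    2 * α * max (u j - u y) (-1) + 2 * α ≤ psiCSa n α y u := by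
  have h := le_ciSup (Set.finite_range fun k : {k // k ≠ y} => max (u k - u y) (-1)).bddAbove
    ⟨j, hj⟩
  have := mul_le_mul_of_nonneg_left h hα0
  have := le_max_left (α * ⨆ k : {k // k ≠ y}, max (u k - u y) (-1))
    ((1 - α) * ⨆ k : {k // k ≠ y}, max (u k - u y) (-1))
  rw [psiCSa]; linarith

lemma le_psiCSa_of_ne' (hα1 : α ≤ 1) {y j : Fin n} (hj : j ≠ y) (u : Fin n → ℝ) :
    2 * (1 - α) * max (u j - u y) (-1) + 2 * α ≤ psiCSa n α y u := by
  have h := le_ciSup (Set.finite_range fun k : {k // k ≠ y} => max (u k - u y) (-1)).bddAbove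
    ⟨j, hj⟩
  have := mul_le_mul_of_nonneg_left h (sub_nonneg.2 hα1)
  have := le_max_right (α * ⨆ k : {k // k ≠ y}, max (u k - u y) (-1))
    ((1 - α) * ⨆ k : {k // k ≠ y}, max (u k - u y) (-1))
  rw [psiCSa]; linarith

lemma psiCSa_nonneg (hn : 2 ≤ n) (hα0 : 0 ≤ α) (y : Fin n) (u : Fin n → ℝ) :
    0 ≤ psiCSa n α y u := by
  have : Nontrivial (Fin n) := Fin.nontrivial_iff_two_le.2 hn
  obtain ⟨j, hj⟩ := exists_ne y
  have := le_psiCSa_of_ne hα0 hj u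
  nlinarith [le_max_right (u j - u y) (-1)]

lemma psiCSa_eq_of_isGreatest {y : Fin n} {u : Fin n → ℝ} {M : ℝ}
    (hM : IsGreatest (Set.range fun k : {k // k ≠ y} => max (u k - u y) (-1)) M) :
    psiCSa n α y u = 2 * max (α * M) ((1 - α) * M) + 2 * α := by
  have hsup : (⨆ k : {k // k ≠ y}, max (u k - u y) (-1)) = M := hM.csSup_eq
  rw [psiCSa, hsup]

lemma psiCSa_zero (hn : 2 ≤ n) (y : Fin n) : psiCSa n α y 0 = 2 * α := by
  have : Nontrivial (Fin n) := Fin.nontrivial_iff_two_le.2 hn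
  obtain ⟨j, hj⟩ := exists_ne y
  rw [psiCSa_eq_of_isGreatest (M := 0) ⟨⟨⟨j, hj⟩, by simp⟩, by rintro _ ⟨k, rfl⟩; simp⟩]
  simp

lemma psiCSa_single (hn : 2 ≤ n) (hα : α ≤ 1 / 2) (y J : Fin n) :
    psiCSa n α y (Pi.single J 1) = if y = J then 0 else 2 := by
  split_ifs with hyJ
  · subst hyJ
    have : Nontrivial (Fin n) := Fin.nontrivial_iff_two_le.2 hn
    obtain ⟨j, hj⟩ := exists_ne y
    rw [psiCSa_eq_of_isGreatest (M := -1)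
      ⟨⟨⟨j, hj⟩, by simp [hj]⟩, by rintro _ ⟨k, rfl⟩; simp [k.2]⟩]
    rw [max_eq_left (by linarith)]; ring
  · rw [psiCSa_eq_of_isGreatest (M := 1)
      ⟨⟨⟨J, Ne.symm hyJ⟩, by simp [hyJ]⟩, by
        rintro _ ⟨k, rfl⟩
        simp only [Pi.single_apply]
        split_ifs <;> norm_num⟩]
    rw [max_eq_right (by linarith)]; ring

lemma top1_eq_of_forall_le {u : Fin n → ℝ} {i : Fin n} (hi : ∀ j, u j ≤ u i) : top1 n u = u i :=
  have : Nonempty (Fin n) := ⟨i⟩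
  le_antisymm (ciSup_le hi) (le_ciSup (Set.finite_range u).bddAbove i)

lemma le_top2_of_ne {u : Fin n → ℝ} {i j : Fin n} (hi : ∀ k, u k ≤ u i) (hj : j ≠ i) :
    u j ≤ top2 n u := by
  have : Nonempty (Fin n) := ⟨i⟩
  refine le_ciInf fun k => ?_
  have hbdd := (Set.finite_range fun l : {l // l ≠ k} => u l).bddAbove
  rcases eq_or_ne j k with rfl | hjk
  · exact (hi j).trans (le_ciSup hbdd ⟨i, hj.symm⟩)
  · exact le_ciSup hbdd ⟨j, hjk⟩

lemma exists_ne_top2_le (hn : 2 ≤ n) (u : Fin n → ℝ) (i : Fin n) :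
    ∃ j, j ≠ i ∧ top2 n u ≤ u j := by
  have : Nontrivial (Fin n) := Fin.nontrivial_iff_two_le.2 hn
  have : Nonempty {l // l ≠ i} := nonempty_subtype.2 (exists_ne i)
  obtain ⟨j, hj⟩ := exists_eq_ciSup_of_finite (f := fun l : {l // l ≠ i} => u l)
  refine ⟨j, j.2, ?_⟩
  rw [hj]
  exact ciInf_le (Set.finite_range _).bddBelow i

lemma top2_le_top1 (hn : 2 ≤ n) (u : Fin n → ℝ) : top2 n u ≤ top1 n u := by
  obtain ⟨j, -, hj⟩ := exists_ne_top2_le hn u ⟨0, by omega⟩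
  exact hj.trans (le_ciSup (Set.finite_range u).bddAbove j)

lemma predCS_of_not_lt {u : Fin n → ℝ} (h : ¬ τ < top1 n u - top2 n u) :
    predCS n τ u = Fin.last n :=
  dif_neg fun h' => h h'.1

lemma predCS_of_lt (hτ : 0 ≤ τ) {u : Fin n → ℝ} {i : Fin n} (hi : ∀ j, u j ≤ u i)
    (h : τ < top1 n u - top2 n u) : predCS n τ u = i.castSucc := by
  have hex : ∃ y : Fin n, ∀ j, u j ≤ u y := ⟨i, hi⟩
  rw [predCS, dif_pos ⟨h, hex⟩]
  congr 1
  -- a second maximiser would lie below `top2`, closing the gap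
  by_contra hne
  have := le_top2_of_ne hi hne
  have := hex.choose_spec i
  rw [top1_eq_of_forall_le hi] at h
  linarith

lemma predCS_eq_castSucc_iff [NeZero n] (hτ : 0 ≤ τ) {u : Fin n → ℝ} {i : Fin n} :
    predCS n τ u = i.castSucc ↔ τ < top1 n u - top2 n u ∧ ∀ j, u j ≤ u i := by
  refine ⟨fun hp => ?_, fun h => predCS_of_lt hτ h.2 h.1⟩
  by_cases h : τ < top1 n u - top2 n u
  · obtain ⟨i', hi'⟩ := Finite.exists_max u
    rw [predCS_of_lt hτ hi' h, (Fin.castSucc_injective n).eq_iff] at hp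
    exact ⟨h, hp ▸ hi'⟩
  · exact absurd (predCS_of_not_lt h ▸ hp) (Fin.castSucc_lt_last i).ne'

lemma predCS_eq_last_iff [NeZero n] (hτ : 0 ≤ τ) {u : Fin n → ℝ} :
    predCS n τ u = Fin.last n ↔ ¬ τ < top1 n u - top2 n u := by
  refine ⟨fun hp h => ?_, predCS_of_not_lt⟩
  obtain ⟨i, hi⟩ := Finite.exists_max u
  exact (Fin.castSucc_lt_last i).ne (predCS_of_lt hτ hi h ▸ hp)

lemma le_sum_mul_psiCSa (hn : 2 ≤ n) (hα0 : 0 ≤ α) (hα1 : α ≤ 1) {q : Fin n → ℝ}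
    (hq : q ∈ stdSimplex ℝ (Fin n)) {u : Fin n → ℝ} {i : Fin n} (hi : ∀ j, u j ≤ u i) :
    2 * α + 2 * min (top1 n u - top2 n u) 1 * (1 - q i - α) ≤ ∑ y, q y * psiCSa n α y u := by
  -- the top class pays at least `2α(1 - t)`, every other class at least `2(1 - α)t + 2α`
  rw [top1_eq_of_forall_le hi]
  set t := min (u i - top2 n u) 1
  obtain ⟨j, hji, hj⟩ := exists_ne_top2_le hn u i
  have hself : 2 * α * (1 - t) ≤ psiCSa n α i u := by
    have hgap : -t ≤ max (u j - u i) (-1) := by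
      rw [← max_neg_neg, neg_sub]; exact max_le_max (by linarith) le_rfl
    nlinarith [le_psiCSa_of_ne hα0 hji u]
  have hother : ∀ y, y ≠ i → 2 * (1 - α) * t + 2 * α ≤ psiCSa n α y u := by
    intro y hy
    have hgap : t ≤ max (u i - u y) (-1) :=
      (min_le_left _ _).trans (le_max_of_le_left (by linarith [le_top2_of_ne hi hy]))
    nlinarith [le_psiCSa_of_ne' hα1 (Ne.symm hy) u]
  calc 2 * α + 2 * t * (1 - q i - α)
      = q i * (2 * α * (1 - t)) + (1 - q i) * (2 * (1 - α) * t + 2 * α) := by ring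
    _ = ∑ y, q y * (if y = i then 2 * α * (1 - t) else 2 * (1 - α) * t + 2 * α) :=
      (sum_mul_ite_eq_of_mem_stdSimplex hq i _ _).symm
    _ ≤ ∑ y, q y * psiCSa n α y u := by
      gcongr with y
      · exact hq.1 y
      · split_ifs with hy
        · exact hy ▸ hself
        · exact hother y hy

/-- The two branches of `predCS` in `calibration`: `r = 1 - q i` is the conditional abstain risk
of predicting the top-scored class `i`, and the right-hand side is the bound of
`le_sum_mul_psiCSa`. -/
lemma commit_ineq {c τ α m r t : ℝ} (hcτ : c ≤ 2 * τ) (hτt : τ ≤ t) (ht1 : t ≤ 1) (hmα : m ≤ α)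
    (hmr : m ≤ r) : c * (r - m) + 2 * m ≤ 2 * α + 2 * t * (r - α) := by
  rcases le_total α r with h | h
  · nlinarith [mul_nonneg (sub_nonneg.2 hcτ) (sub_nonneg.2 h),
      mul_nonneg (sub_nonneg.2 hτt) (sub_nonneg.2 h),
      mul_nonneg (by linarith : (0 : ℝ) ≤ 2 - c) (sub_nonneg.2 hmα)]
  · nlinarith [mul_nonneg (by linarith : (0 : ℝ) ≤ 2 - c) (sub_nonneg.2 hmr),
      mul_nonneg (sub_nonneg.2 ht1) (sub_nonneg.2 h)]

lemma abstain_ineq {c τ α m r t : ℝ} (hcτ : c ≤ 2 * (1 - τ)) (ht0 : 0 ≤ t) (htτ : t ≤ τ)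
    (hmα : m ≤ α) (hmr : m ≤ r) : c * (α - m) + 2 * m ≤ 2 * α + 2 * t * (r - α) := by
  rcases le_total α r with h | h
  · nlinarith [mul_nonneg (by linarith : (0 : ℝ) ≤ 2 - c) (sub_nonneg.2 hmα),
      mul_nonneg ht0 (sub_nonneg.2 h)]
  · nlinarith [mul_nonneg (by linarith : (0 : ℝ) ≤ 2 - 2 * τ - c) (sub_nonneg.2 hmα),
      mul_nonneg (ht0.trans htτ) (sub_nonneg.2 hmr),
      mul_nonneg (sub_nonneg.2 htτ) (sub_nonneg.2 h)]

theorem calibration (hn : 2 ≤ n) (hα0 : 0 ≤ α) (hα1 : α ≤ 1) (hτ0 : 0 ≤ τ) (hτ1 : τ ≤ 1)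
    {c : ℝ} (hcτ : c ≤ 2 * τ) (hcτ' : c ≤ 2 * (1 - τ)) {q : Fin n → ℝ}
    (hq : q ∈ stdSimplex ℝ (Fin n)) (u : Fin n → ℝ) {m : ℝ}
    (hm : ∀ t, m ≤ ∑ y, q y * abstainLoss n α y t) :
    c * (∑ y, q y * abstainLoss n α y (predCS n τ u) - m) + 2 * m ≤
      ∑ y, q y * psiCSa n α y u := by
  have : NeZero n := ⟨by omega⟩
  obtain ⟨i, hi⟩ := Finite.exists_max u
  have hmα : m ≤ α := by simpa only [sum_mul_abstainLoss_last hq] using hm (Fin.last n)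
  have hmr : m ≤ 1 - q i := by
    simpa only [sum_mul_abstainLoss_castSucc hq] using hm i.castSucc
  refine le_trans ?_ (le_sum_mul_psiCSa hn hα0 hα1 hq hi)
  by_cases h : τ < top1 n u - top2 n u
  · rw [predCS_of_lt hτ0 hi h, sum_mul_abstainLoss_castSucc hq]
    exact commit_ineq hcτ (le_min h.le hτ1) (min_le_right _ _) hmα hmr
  · rw [predCS_of_not_lt h, sum_mul_abstainLoss_last hq]
    exact abstain_ineq hcτ' (le_min (sub_nonneg.2 (top2_le_top1 hn u)) zero_le_one)
      ((min_le_left _ _).trans (not_lt.1 h)) hmα hmr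

/-- For `α ≤ 1/2` at most one entry of a probability vector exceeds `1 - α`, so this is
`Pi.single J 1` or `0`. -/
noncomputable def optimalScore (α : ℝ) (q : Fin n → ℝ) : Fin n → ℝ :=
  fun j => if 1 - α < q j then 1 else 0

lemma sum_mul_psiCSa_optimalScore_le (hn : 2 ≤ n) (hα1 : α ≤ 1 / 2)
    {q : Fin n → ℝ} (hq : q ∈ stdSimplex ℝ (Fin n)) (t : Fin (n + 1)) :
    ∑ y, q y * psiCSa n α y (optimalScore α q) ≤ 2 * ∑ y, q y * abstainLoss n α y t := by
  by_cases hJ : ∃ J, 1 - α < q J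
  · obtain ⟨J, hJ⟩ := hJ
    have hlt : ∀ j, j ≠ J → q j < α := fun j hj => by
      linarith [add_le_one_of_mem_stdSimplex hq hj]
    have hscore : optimalScore α q = Pi.single J 1 := by
      funext j
      rcases eq_or_ne j J with rfl | hj
      · simp [optimalScore, hJ]
      · simp [optimalScore, hj, (hlt j hj).trans_le (by linarith : α ≤ 1 - α) |>.le]
    simp only [hscore, psiCSa_single hn hα1, sum_mul_ite_eq_of_mem_stdSimplex hq]
    induction t using Fin.lastCases with
    | last => rw [sum_mul_abstainLoss_last hq]; linarith
    | cast i =>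
      rw [sum_mul_abstainLoss_castSucc hq]
      rcases eq_or_ne i J with rfl | hi
      · linarith
      · linarith [hlt i hi]
  · simp only [not_exists, not_lt] at hJ
    have hscore : optimalScore α q = 0 := funext fun j => if_neg (hJ j).not_gt
    simp only [hscore, psiCSa_zero hn, ← sum_mul, hq.2, one_mul]
    induction t using Fin.lastCases with
    | last => rw [sum_mul_abstainLoss_last hq]
    | cast i => rw [sum_mul_abstainLoss_castSucc hq]; linarith [hJ i]

lemma mul_sum_abstainLoss_predCS_add_le (hn : 2 ≤ n) (hα0 : 0 ≤ α) (hα1 : α ≤ 1 / 2)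
    (hτ0 : 0 ≤ τ) (hτ1 : τ ≤ 1) {q : Fin n → ℝ} (hq : q ∈ stdSimplex ℝ (Fin n))
    (u : Fin n → ℝ) (t : Fin (n + 1)) :
    2 * min τ (1 - τ) * ∑ y, q y * abstainLoss n α y (predCS n τ u) +
        ∑ y, q y * psiCSa n α y (optimalScore α q) ≤
      ∑ y, q y * psiCSa n α y u + 2 * min τ (1 - τ) * ∑ y, q y * abstainLoss n α y t := by
  have hopt := sum_mul_psiCSa_optimalScore_le hn hα1 hq
  have hcal := calibration hn hα0 (by linarith) hτ0 hτ1 (c := 2 * min τ (1 - τ))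
    (by linarith [min_le_left τ (1 - τ)]) (by linarith [min_le_right τ (1 - τ)]) hq u
    (m := (∑ y, q y * psiCSa n α y (optimalScore α q)) / 2) (fun t => by linarith [hopt t])
  nlinarith [hopt t, le_min hτ0 (sub_nonneg.2 hτ1)]

lemma measurable_psiCSa (y : Fin n) : Measurable (psiCSa n α y) := by
  have hM : Measurable fun u : Fin n → ℝ => ⨆ j : {j // j ≠ y}, max (u j - u y) (-1) :=
    Measurable.iSup fun j => by fun_prop
  exact (((hM.const_mul α).max (hM.const_mul (1 - α))).const_mul 2).add_const _

lemma measurable_predCS [NeZero n] (hτ : 0 ≤ τ) : Measurable (predCS n τ) := by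
  have hgap : Measurable fun u : Fin n → ℝ => top1 n u - top2 n u :=
    (Measurable.iSup fun i => measurable_pi_apply i).sub
      (Measurable.iInf fun i => Measurable.iSup fun j : {j // j ≠ i} => measurable_pi_apply j.1)
  have hcommit : MeasurableSet {u : Fin n → ℝ | τ < top1 n u - top2 n u} :=
    measurableSet_lt measurable_const hgap
  refine measurable_to_countable' fun t => ?_
  induction t using Fin.lastCases with
  | last =>
    simp only [Set.preimage, Set.mem_singleton_iff, predCS_eq_last_iff hτ]
    exact hcommit.compl
  | cast i =>
    simp only [Set.preimage, Set.mem_singleton_iff, predCS_eq_castSucc_iff hτ, Set.ofPred_and,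
      Set.ofPred_forall]
    exact hcommit.inter (.iInter fun j => measurableSet_le (measurable_pi_apply j)
      (measurable_pi_apply i))

lemma measurable_optimalScore : Measurable (optimalScore (n := n) α) :=
  measurable_pi_lambda _ fun j =>
    Measurable.ite (measurableSet_lt measurable_const (measurable_pi_apply j)) measurable_const
      measurable_const

variable {X : Type*} [MeasurableSpace X]

/-- `er^{ℓ^α}_D[h]`. -/
noncomputable def abstainRisk (n : ℕ) (α : ℝ) (D : Measure (X × Fin n)) (h : X → Fin (n + 1)) :
    ℝ≥0∞ :=
  ∫⁻ z, ENNReal.ofReal (abstainLoss n α z.2 (h z.1)) ∂D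

/-- `er^{ψ^{CS,α}}_D[g]`. -/
noncomputable def psiCSaRisk (n : ℕ) (α : ℝ) (D : Measure (X × Fin n)) (g : X → Fin n → ℝ) :
    ℝ≥0∞ :=
  ∫⁻ z, ENNReal.ofReal (psiCSa n α z.2 (g z.1)) ∂D

lemma mem_stdSimplex_measureReal_singleton (ν : Measure (Fin n)) [IsProbabilityMeasure ν] :
    (fun y => ν.real {y}) ∈ stdSimplex ℝ (Fin n) :=
  ⟨fun _ => measureReal_nonneg, by rw [sum_measureReal_singleton, coe_univ, probReal_univ]⟩

lemma lintegral_ofReal_eq_of_isCondKernel (D : Measure (X × Fin n)) [IsFiniteMeasure D]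
    (κ : Kernel X (Fin n)) [IsFiniteKernel κ] [D.IsCondKernel κ] {ℓ : X → Fin n → ℝ}
    (hℓ : ∀ y, Measurable fun x => ℓ x y) (hℓ0 : ∀ x y, 0 ≤ ℓ x y) :
    ∫⁻ z, ENNReal.ofReal (ℓ z.1 z.2) ∂D =
      ∫⁻ x, ENNReal.ofReal (∑ y, (κ x).real {y} * ℓ x y) ∂D.fst := by
  conv_lhs => rw [← D.disintegrate κ]
  rw [Measure.lintegral_compProd (measurable_from_prod_countable_left fun y =>
    (hℓ y).ennreal_ofReal)]
  refine lintegral_congr fun x => ?_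
  rw [lintegral_fintype, ENNReal.ofReal_sum_of_nonneg fun y _ =>
    mul_nonneg measureReal_nonneg (hℓ0 x y)]
  refine sum_congr rfl fun y _ => ?_
  rw [ENNReal.ofReal_mul measureReal_nonneg, ofReal_measureReal, mul_comm]

lemma psiCSaRisk_zero_ne_top (hn : 2 ≤ n) (D : Measure (X × Fin n)) [IsFiniteMeasure D] :
    psiCSaRisk n α D 0 ≠ ⊤ := by
  simp only [psiCSaRisk, Pi.zero_apply, psiCSa_zero hn, lintegral_const]
  exact ENNReal.mul_ne_top ENNReal.ofReal_ne_top (measure_ne_top D _)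

theorem exists_risk_calibration (hn : 2 ≤ n) (hα0 : 0 ≤ α) (hα1 : α ≤ 1 / 2) (hτ0 : 0 ≤ τ)
    (hτ1 : τ ≤ 1) (D : Measure (X × Fin n)) [IsFiniteMeasure D] (κ : Kernel X (Fin n))
    [IsMarkovKernel κ] [D.IsCondKernel κ] {g : X → Fin n → ℝ} (hg : Measurable g) :
    ∃ v : X → Fin n → ℝ, Measurable v ∧ ∀ h : X → Fin (n + 1), Measurable h →
      ENNReal.ofReal (2 * min τ (1 - τ)) * abstainRisk n α D (predCS n τ ∘ g) +
          psiCSaRisk n α D v ≤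
        psiCSaRisk n α D g + ENNReal.ofReal (2 * min τ (1 - τ)) * abstainRisk n α D h := by
  have : NeZero n := ⟨by omega⟩
  have hc : 0 ≤ 2 * min τ (1 - τ) := mul_nonneg zero_le_two (le_min hτ0 (sub_nonneg.2 hτ1))
  set q : X → Fin n → ℝ := fun x y => (κ x).real {y}
  have hq : ∀ x, q x ∈ stdSimplex ℝ (Fin n) := fun x => mem_stdSimplex_measureReal_singleton _
  have hqm : Measurable q := measurable_pi_lambda _ fun y =>
    (κ.measurable_coe (measurableSet_singleton y)).ennreal_toReal
  have habs : ∀ f : X → Fin (n + 1), Measurable f → abstainRisk n α D f =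
      ∫⁻ x, ENNReal.ofReal (∑ y, q x y * abstainLoss n α y (f x)) ∂D.fst := fun f hf =>
    lintegral_ofReal_eq_of_isCondKernel D κ (ℓ := fun x y => abstainLoss n α y (f x))
      (fun y => (measurable_of_countable (abstainLoss n α y)).comp hf)
      fun _ _ => abstainLoss_nonneg hα0 _ _
  have hpsi : ∀ f : X → Fin n → ℝ, Measurable f → psiCSaRisk n α D f =
      ∫⁻ x, ENNReal.ofReal (∑ y, q x y * psiCSa n α y (f x)) ∂D.fst := fun f hf =>
    lintegral_ofReal_eq_of_isCondKernel D κ (ℓ := fun x y => psiCSa n α y (f x))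
      (fun y => (measurable_psiCSa y).comp hf) fun _ _ => psiCSa_nonneg hn hα0 _ _
  have hv : Measurable fun x => optimalScore α (q x) := measurable_optimalScore.comp hqm
  refine ⟨_, hv, fun h hh => ?_⟩
  have hψg : Measurable fun x => ENNReal.ofReal (∑ y, q x y * psiCSa n α y (g x)) :=
    (Finset.measurable_sum _ fun y _ =>
      ((measurable_pi_apply y).comp hqm).mul ((measurable_psiCSa y).comp hg)).ennreal_ofReal
  rw [habs _ ((measurable_predCS hτ0).comp hg), habs h hh, hpsi g hg, hpsi _ hv,
    ← lintegral_const_mul' _ _ ENNReal.ofReal_ne_top,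
    ← lintegral_const_mul' _ _ ENNReal.ofReal_ne_top, ← lintegral_add_left hψg]
  refine (le_lintegral_add _ _).trans (lintegral_mono fun x => ?_)
  have hnonneg : ∀ f : Fin n → ℝ, (∀ y, 0 ≤ f y) → 0 ≤ ∑ y, q x y * f y := fun f hf =>
    sum_nonneg fun y _ => mul_nonneg ((hq x).1 y) (hf y)
  exact ENNReal.ofReal_mul_add_le hc (hnonneg _ fun _ => abstainLoss_nonneg hα0 _ _)
    (hnonneg _ fun _ => psiCSa_nonneg hn hα0 _ _)
    (mul_sum_abstainLoss_predCS_add_le hn hα0 hα1 hτ0 hτ1 (hq x) (g x) (h x))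

end

theorem psiCSa_excess_risk_bound (n : ℕ) (hn : 2 ≤ n)
    (α : ℝ) (hα0 : 0 ≤ α) (hα1 : α ≤ 1 / 2)
    (τ : ℝ) (hτ0 : 0 < τ) (hτ1 : τ < 1)
    {X : Type*} [MeasurableSpace X] (D : Measure (X × Fin n)) [IsProbabilityMeasure D]
    (g : X → Fin n → ℝ) (hg : Measurable g) :
    (∫⁻ z, ENNReal.ofReal (abstainLoss n α z.2 (predCS n τ (g z.1))) ∂D) -
      (⨅ h : {h : X → Fin (n + 1) // Measurable h},
        ∫⁻ z, ENNReal.ofReal (abstainLoss n α z.2 (h.1 z.1)) ∂D) ≤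
    ((∫⁻ z, ENNReal.ofReal (psiCSa n α z.2 (g z.1)) ∂D) -
      (⨅ g' : {g' : X → Fin n → ℝ // Measurable g'},
        ∫⁻ z, ENNReal.ofReal (psiCSa n α z.2 (g'.1 z.1)) ∂D)) /
      ENNReal.ofReal (2 * min τ (1 - τ)) := by
  have : NeZero n := ⟨by omega⟩
  have hc : ENNReal.ofReal (2 * min τ (1 - τ)) ≠ 0 :=
    (ENNReal.ofReal_pos.2 (mul_pos two_pos (lt_min hτ0 (sub_pos.2 hτ1)))).ne'
  obtain ⟨v, hv, hcal⟩ := exists_risk_calibration hn hα0 hα1 hτ0.le hτ1.le D D.condKernel hg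
  have he : (⨅ g' : {g' : X → Fin n → ℝ // Measurable g'}, psiCSaRisk n α D g'.1) ≠ ⊤ :=
    ne_top_of_le_ne_top (psiCSaRisk_zero_ne_top hn D)
      (iInf_le (fun g' : {g' // Measurable g'} => psiCSaRisk n α D g'.1) ⟨0, measurable_const⟩)
  refine ENNReal.sub_le_sub_div_of_mul_add_le hc ENNReal.ofReal_ne_top he ?_
  calc _ ≤ ⨅ h : {h : X → Fin (n + 1) // Measurable h}, psiCSaRisk n α D g +
          ENNReal.ofReal (2 * min τ (1 - τ)) * abstainRisk n α D h.1 :=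
      le_iInf fun h => (add_le_add_right (iInf_le (fun g' : {g' // Measurable g'} =>
        psiCSaRisk n α D g'.1) ⟨v, hv⟩) _).trans (hcal h.1 h.2)
    _ = _ := by rw [ENNReal.mul_iInf_of_ne hc ENNReal.ofReal_ne_top, ENNReal.add_iInf]; rfl
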